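/- arXiv:0806.0488 — 2 statements merged into one kernel-verified Lean document; each statement's English description precedes it below -/
import Mathlib

section
/- Sylvester's determinant identity: Let A = (a_{ij}) be an n×n matrix over a commutative ring, and for 1 ≤ k ≤ n−1 and k+1 ≤ i,j ≤ n define a^{(k)}_{ij} as the determinant of the (k+1)×(k+1) matrix formed by the first k rows and columns of A bordered with row i and column j. Then det(A) · (a^{(k-1)}_{kk})^{n-k-1} equals the determinant of the (n−k)×(n−k) matrix whose (i,j) entry is a^{(k)}_{i+k, j+k}. -/
open Matrix

/-- The bordered minor `a^{(k)}_{ij}`: the `(k+1)×(k+1)` matrix formed by the first `k`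
rows and columns of `A`, bordered with row `i` and column `j`. -/
def borderedMinor {R : Type*} [CommRing R] {n : ℕ} (A : Matrix (Fin n) (Fin n) R)
    (k : ℕ) (hk : k ≤ n) (i j : Fin n) : Matrix (Fin (k + 1)) (Fin (k + 1)) R :=
  Matrix.of fun p q =>
    A (if h : (p : ℕ) < k then ⟨p, lt_of_lt_of_le h hk⟩ else i)
      (if h : (q : ℕ) < k then ⟨q, lt_of_lt_of_le h hk⟩ else j)

/-!
If the leading block `B` of `A = [[B, C], [D, E]]` is invertible, everything is expressed through
the Schur complement `S = E - D B⁻¹ C`: `det A = det B * det S`, and the bordered minor at `(i, j)`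
is the determinant of `[[B, C_j], [D_i, E_ij]]`, whose Schur complement is the `1 × 1` matrix
`S_ij`. So the matrix of bordered minors is `det B • S` and its determinant is
`det B ^ (n - k) * det S`.
Both sides of the identity are integer polynomials in the entries of `A`, so the general case
follows from the case of the generic matrix over `ℤ[X_ij]`, whose leading minor is nonzero and
hence invertible in the fraction field.
-/

namespace Matrix

variable {m n R S : Type*}

def borderIndex (i : n) : m ⊕ Unit → m ⊕ n :=
  Sum.elim Sum.inl fun _ => Sum.inr i

theorem submatrix_borderIndex {α : Type*} (A : Matrix (m ⊕ n) (m ⊕ n) α) (i j : n) :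
    A.submatrix (borderIndex i) (borderIndex j) =
      fromBlocks A.toBlocks₁₁ (replicateCol Unit fun p => A.toBlocks₁₂ p j)
        (replicateRow Unit (A.toBlocks₂₁ i)) (of fun _ _ => A.toBlocks₂₂ i j) := by
  ext (p | p) (q | q) <;> rfl

variable [Fintype m] [DecidableEq m] [CommRing R] [CommRing S]

def borderedMinors (A : Matrix (m ⊕ n) (m ⊕ n) R) : Matrix n n R :=
  of fun i j => (A.submatrix (borderIndex i) (borderIndex j)).det

theorem borderedMinors_map (A : Matrix (m ⊕ n) (m ⊕ n) R) (f : R →+* S) :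
    borderedMinors (A.map f) = (borderedMinors A).map f := by
  ext i j
  exact (RingHom.map_det f _).symm

theorem borderedMinors_eq_det_smul_schur (A : Matrix (m ⊕ n) (m ⊕ n) R)
    [Invertible A.toBlocks₁₁] :
    borderedMinors A =
      A.toBlocks₁₁.det • (A.toBlocks₂₂ - A.toBlocks₂₁ * ⅟A.toBlocks₁₁ * A.toBlocks₁₂) := by
  ext i j
  rw [borderedMinors, of_apply, submatrix_borderIndex, det_fromBlocks₁₁,
    det_unique (_ : Matrix Unit Unit R)]
  simp [mul_apply]

variable [Fintype n] [DecidableEq n]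

theorem det_mul_det_toBlocks₁₁_pow_of_invertible [Nonempty n] (A : Matrix (m ⊕ n) (m ⊕ n) R)
    [Invertible A.toBlocks₁₁] :
    A.det * A.toBlocks₁₁.det ^ (Fintype.card n - 1) = (borderedMinors A).det := by
  have hA : A.det = A.toBlocks₁₁.det *
      (A.toBlocks₂₂ - A.toBlocks₂₁ * ⅟A.toBlocks₁₁ * A.toBlocks₁₂).det := by
    conv_lhs => rw [← fromBlocks_toBlocks A]
    exact det_fromBlocks₁₁ ..
  rw [hA, borderedMinors_eq_det_smul_schur, det_smul, mul_right_comm, ← pow_succ',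
    Nat.sub_add_cancel Fintype.card_pos]

theorem map_det_mul_det_toBlocks₁₁_pow (A : Matrix (m ⊕ n) (m ⊕ n) R) (f : R →+* S) (e : ℕ) :
    f (A.det * A.toBlocks₁₁.det ^ e) = (A.map f).det * (A.map f).toBlocks₁₁.det ^ e := by
  rw [map_mul, map_pow, RingHom.map_det, RingHom.map_det]
  rfl

theorem map_det_borderedMinors (A : Matrix (m ⊕ n) (m ⊕ n) R) (f : R →+* S) :
    f (borderedMinors A).det = (borderedMinors (A.map f)).det := by
  rw [RingHom.map_det, borderedMinors_map]
  rfl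

theorem det_mul_det_toBlocks₁₁_pow_of_ne_zero [IsDomain R] [Nonempty n]
    (A : Matrix (m ⊕ n) (m ⊕ n) R) (h : A.toBlocks₁₁.det ≠ 0) :
    A.det * A.toBlocks₁₁.det ^ (Fintype.card n - 1) = (borderedMinors A).det := by
  let f := algebraMap R (FractionRing R)
  have hf : Function.Injective f := IsFractionRing.injective R (FractionRing R)
  have hB : (A.map f).toBlocks₁₁.det ≠ 0 := by
    change (f.mapMatrix A.toBlocks₁₁).det ≠ 0
    rwa [← RingHom.map_det, map_ne_zero_iff f hf]
  have := (A.map f).toBlocks₁₁.invertibleOfIsUnitDet (isUnit_iff_ne_zero.mpr hB)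
  apply hf
  rw [map_det_mul_det_toBlocks₁₁_pow, map_det_borderedMinors]
  exact det_mul_det_toBlocks₁₁_pow_of_invertible _

variable (m n R) in
theorem det_toBlocks₁₁_mvPolynomialX_ne_zero [Nontrivial R] :
    (mvPolynomialX (m ⊕ n) (m ⊕ n) R).toBlocks₁₁.det ≠ 0 := by
  let ev := MvPolynomial.eval fun p : (m ⊕ n) × (m ⊕ n) => (1 : Matrix (m ⊕ n) (m ⊕ n) R) p.1 p.2
  have hev : ev (mvPolynomialX (m ⊕ n) (m ⊕ n) R).toBlocks₁₁.det = 1 := by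
    rw [RingHom.map_det]
    change (ev.mapMatrix (mvPolynomialX (m ⊕ n) (m ⊕ n) R)).toBlocks₁₁.det = 1
    rw [mvPolynomialX_mapMatrix_eval, ← diagonal_one, toBlocks₁₁_diagonal, diagonal_one, det_one]
  intro h
  rw [h, map_zero] at hev
  exact zero_ne_one hev

theorem det_mul_det_toBlocks₁₁_pow [Nonempty n] (A : Matrix (m ⊕ n) (m ⊕ n) R) :
    A.det * A.toBlocks₁₁.det ^ (Fintype.card n - 1) = (borderedMinors A).det := by
  have := congrArg (MvPolynomial.eval₂Hom (Int.castRingHom R) fun p => A p.1 p.2)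
    (det_mul_det_toBlocks₁₁_pow_of_ne_zero _ (det_toBlocks₁₁_mvPolynomialX_ne_zero m n ℤ))
  rwa [map_det_mul_det_toBlocks₁₁_pow, map_det_borderedMinors, MvPolynomial.coe_eval₂Hom,
    mvPolynomialX_map_eval₂] at this

end Matrix

def finSumFinSubEquiv {k n : ℕ} (hk : k ≤ n) : Fin k ⊕ Fin (n - k) ≃ Fin n :=
  finSumFinEquiv.trans (finCongr (Nat.add_sub_of_le hk))

theorem toBlocks₁₁_submatrix_finSumFinSubEquiv {α : Type*} {n k : ℕ}
    (A : Matrix (Fin n) (Fin n) α) (hk : k ≤ n) :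
    (A.submatrix (finSumFinSubEquiv hk) (finSumFinSubEquiv hk)).toBlocks₁₁ =
      A.submatrix (Fin.castLE hk) (Fin.castLE hk) :=
  rfl

section

variable {R : Type*} [CommRing R] {n k : ℕ} (A : Matrix (Fin n) (Fin n) R)

theorem det_borderedMinor_sub_one_self (hk1 : 1 ≤ k) (hkn : k ≤ n) :
    (borderedMinor A (k - 1) (by omega) ⟨k - 1, by omega⟩ ⟨k - 1, by omega⟩).det =
      (A.submatrix (Fin.castLE hkn) (Fin.castLE hkn)).det := by
  rw [← det_submatrix_equiv_self (finCongr (Nat.sub_add_cancel hk1))]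
  congr 1
  ext p q
  simp only [borderedMinor, of_apply, submatrix_apply]
  congr 1 <;> split <;> ext <;>
    simp only [finCongr_apply, Fin.val_castLE, Fin.val_cast] <;> omega

theorem det_borderedMinor_add (hk : k ≤ n) (i j : Fin (n - k)) :
    (borderedMinor A k hk ⟨i + k, by omega⟩ ⟨j + k, by omega⟩).det =
      borderedMinors (A.submatrix (finSumFinSubEquiv hk) (finSumFinSubEquiv hk)) i j := by
  let σ : Fin (k + 1) ≃ Fin k ⊕ Unit :=
    finSumFinEquiv.symm.trans (Equiv.sumCongr (Equiv.refl _) (Equiv.equivPUnit (Fin 1)))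
  rw [borderedMinors, of_apply, ← det_submatrix_equiv_self σ.symm]
  congr 1
  ext p q
  simp only [borderedMinor, of_apply, submatrix_apply]
  rcases p with p | p <;> rcases q with q | q <;> congr 1 <;> ext <;>
    simp [σ, borderIndex, finSumFinSubEquiv, add_comm]

end

/-- Sylvester's determinant identity. -/
theorem sylvester_identity {R : Type*} [CommRing R] {n : ℕ}
    (A : Matrix (Fin n) (Fin n) R) (k : ℕ) (hk1 : 1 ≤ k) (hk2 : k ≤ n - 1) :
    A.det *
        ((borderedMinor A (k - 1) (by omega) ⟨k - 1, by omega⟩ ⟨k - 1, by omega⟩).det) ^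
          (n - k - 1) =
      Matrix.det (Matrix.of fun (i j : Fin (n - k)) =>
        (borderedMinor A k (by omega)
          ⟨(i : ℕ) + k, by have := i.isLt; omega⟩
          ⟨(j : ℕ) + k, by have := j.isLt; omega⟩).det) := by
  have hkn : k ≤ n := by omega
  have : Nonempty (Fin (n - k)) := ⟨⟨0, by omega⟩⟩
  have h := det_mul_det_toBlocks₁₁_pow
    (A.submatrix (finSumFinSubEquiv hkn) (finSumFinSubEquiv hkn))
  rw [det_submatrix_equiv_self, toBlocks₁₁_submatrix_finSumFinSubEquiv, Fintype.card_fin] at h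
  rw [det_borderedMinor_sub_one_self A hk1 hkn, h]
  congr 1
  ext i j
  exact (det_borderedMinor_add A hkn i j).symm
end

section
/- Multilinearity reduction of a bordered determinant matrix: let U be a nonsingular r×r matrix over a field K, v a column vector of length r, and for each pair (p,q) let b_{p,q} be a row vector of length r and g_{p,q} a scalar. Define H_{p,q} = det of the (r+1)×(r+1) matrix [[U, v],[b_{p,q}, g_{p,q}]]. If for each p all b_{p,q} are equal to b_{p,1} after adding the row correction (i.e., setting h_{p,q} = x_p · v where x_p solves x_p U = b_{p,1}), then the n×n determinant |(H_{p,q})| equals det(U)^{n-1} times the determinant of the n×n matrix obtained by Sylvester's identity reduction, i.e. the reduced bordered matrix. -/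
open Matrix

/-- Multilinearity reduction of a bordered determinant matrix: with `U` invertible,
`H_{p,q} = det [[U,v],[b_{p,q}, g_{p,q}]]`, correction vectors `x_{p,q}` solving
`x_{p,q} U = b_{p,1} - b_{p,q}` and corrected entries `h_{p,q} = g_{p,q} + x_{p,q} ⬝ v`,
one has `det H = det(U)^{n-1} · det N̂`, where `N̂` is the reduced bordered matrix with
`U` and repeated columns `v` on top and rows `(b_{p,1}, h_{p,1}, …, h_{p,n})` below. -/
theorem nested_det_reduction {K : Type*} [Field K] {r nn : ℕ} (hnn : 0 < nn)
    (U : Matrix (Fin r) (Fin r) K) (hU : IsUnit U.det)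
    (v : Fin r → K)
    (b : Fin nn → Fin nn → (Fin r → K)) (g : Fin nn → Fin nn → K)
    (x : Fin nn → Fin nn → (Fin r → K))
    (hx : ∀ p q, (x p q) ᵥ* U = b p ⟨0, hnn⟩ - b p q)
    (h : Fin nn → Fin nn → K)
    (hh : ∀ p q, h p q = g p q + (x p q) ⬝ᵥ v)
    (H : Matrix (Fin nn) (Fin nn) K)
    (hH : ∀ p q, H p q =
      (Matrix.fromBlocks U (Matrix.of fun i (_ : Fin 1) => v i)
        (Matrix.of fun (_ : Fin 1) jj => b p q jj)
        (Matrix.of fun (_ : Fin 1) (_ : Fin 1) => g p q)).det) :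
    H.det = U.det ^ (nn - 1) *
      (Matrix.fromBlocks U (Matrix.of fun i (_ : Fin nn) => v i)
        (Matrix.of fun p jj => b p ⟨0, hnn⟩ jj)
        (Matrix.of fun p q => h p q)).det := by
  haveI : Invertible U := U.invertibleOfIsUnitDet hU
  have hinv : ⅟ U = U⁻¹ := invOf_eq_nonsing_inv U
  set w : Fin r → K := U⁻¹ *ᵥ v with hw
  have hUw : U *ᵥ w = v := by
    rw [hw, Matrix.mulVec_mulVec, Matrix.mul_nonsing_inv U hU, Matrix.one_mulVec]
  -- value of the corrections
  have hxv : ∀ p q, x p q ⬝ᵥ v = (b p ⟨0, hnn⟩ - b p q) ⬝ᵥ w := by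
    intro p q
    rw [← hUw, Matrix.dotProduct_mulVec, hx]
  -- entrywise formula for H
  have hHentry : ∀ p q, H p q = U.det * (h p q - b p ⟨0, hnn⟩ ⬝ᵥ w) := by
    intro p q
    rw [hH, Matrix.det_fromBlocks₁₁, Matrix.det_fin_one]
    congr 1
    have : ((Matrix.of fun (_ : Fin 1) (_ : Fin 1) => g p q) -
        (Matrix.of fun (_ : Fin 1) jj => b p q jj) * ⅟ U *
          (Matrix.of fun i (_ : Fin 1) => v i)) 0 0
        = g p q - (b p q ᵥ* U⁻¹) ⬝ᵥ v := by
      simp [Matrix.mul_apply, hinv, Matrix.vecMul, dotProduct]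
    rw [this, ← Matrix.dotProduct_mulVec, ← hw, hh, hxv, sub_dotProduct]
    ring
  -- H = det U • M
  have hHM : H = U.det • Matrix.of (fun p q => h p q - b p ⟨0, hnn⟩ ⬝ᵥ w) := by
    ext p q
    simp [hHentry p q]
  -- RHS via Schur complement
  rw [Matrix.det_fromBlocks₁₁]
  have hS : ((Matrix.of fun p q => h p q) -
      (Matrix.of fun p jj => b p ⟨0, hnn⟩ jj) * ⅟ U *
        (Matrix.of fun i (_ : Fin nn) => v i))
      = Matrix.of (fun p q => h p q - b p ⟨0, hnn⟩ ⬝ᵥ w) := by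
    ext p q
    have h2 : ((Matrix.of fun p jj => b p ⟨0, hnn⟩ jj) * ⅟ U *
        (Matrix.of fun i (_ : Fin nn) => v i)) p q = (b p ⟨0, hnn⟩ ᵥ* U⁻¹) ⬝ᵥ v := by
      simp [Matrix.mul_apply, hinv, Matrix.vecMul, dotProduct]
    simp only [Matrix.sub_apply, Matrix.of_apply, h2, ← Matrix.dotProduct_mulVec, hw]
  rw [hS, hHM, Matrix.det_smul]
  rw [Fintype.card_fin,
    show U.det ^ nn = U.det ^ (nn - 1) * U.det from by
      rw [← pow_succ, Nat.sub_add_cancel hnn]]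
  ring
end
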